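/- arXiv:2409.09943 — 5 statements merged into one kernel-verified Lean document; each statement's English description precedes it below -/
import Mathlib

section
/- For every function f that is integrable on [0,1], one has ∫₀¹ S(f)(x) dx = ∫₀¹ f(x) dx. -/
/-!
The kernel `T f` is symmetric about `1/2`, i.e. `T f (1 - t) = T f t`. Hence
`S f x + S f (1 - x) = ∫₀¹ T f` for every `x ∈ [0,1]`, and averaging over `x ↦ 1 - x` gives
`∫₀¹ S f = ½ ∫₀¹ T f = ∫₀^{1/2} T f`, which is `∫₀¹ f` after the substitution `u = 2t`.
-/

open MeasureTheory intervalIntegral Set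

/-- The piecewise transformation `T(f)` from the paper: `T(f)(x) = 2 f(2x)` on `[0,1/2]`
and `T(f)(x) = 2 f(2-2x)` on `(1/2,1]`. -/
noncomputable def T (f : ℝ → ℝ) (x : ℝ) : ℝ :=
  if x ≤ 1 / 2 then 2 * f (2 * x) else 2 * f (2 - 2 * x)

/-- The integral operator `S(f)(x) = ∫₀ˣ T(f)(t) dt`. -/
noncomputable def S (f : ℝ → ℝ) (x : ℝ) : ℝ := ∫ t in (0:ℝ)..x, T f t

section Symmetric

variable {E : Type*} [NormedAddCommGroup E] {g : ℝ → E} {a : ℝ}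

lemma sub_mem_uIcc_zero {x : ℝ} (hx : x ∈ uIcc 0 a) : a - x ∈ uIcc 0 a := by
  rcases mem_uIcc.1 hx with ⟨h₀, h₁⟩ | ⟨h₀, h₁⟩
  · exact mem_uIcc.2 (Or.inl ⟨by linarith, by linarith⟩)
  · exact mem_uIcc.2 (Or.inr ⟨by linarith, by linarith⟩)

lemma intervalIntegrable_right_half_of_symm (hsymm : ∀ t, g (a - t) = g t)
    (hg : IntervalIntegrable g volume 0 (a / 2)) : IntervalIntegrable g volume (a / 2) a := by
  simpa [hsymm, sub_half] using (hg.comp_sub_left a).symm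

lemma integral_eq_two_smul_integral_half_of_symm [NormedSpace ℝ E]
    (hsymm : ∀ t, g (a - t) = g t) (hg : IntervalIntegrable g volume 0 (a / 2)) :
    ∫ t in 0..a, g t = (2 : ℝ) • ∫ t in 0..a / 2, g t := by
  have hright : ∫ t in a / 2..a, g t = ∫ t in 0..a / 2, g t := by
    simpa [hsymm, sub_half] using integral_comp_sub_left (fun t => g t) (a := a / 2) (b := a) a
  rw [← integral_add_adjacent_intervals hg (intervalIntegrable_right_half_of_symm hsymm hg),
    hright, two_smul]

lemma integral_primitive_of_symm [NormedSpace ℝ E] [CompleteSpace E]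
    (hsymm : ∀ t, g (a - t) = g t) (hg : IntervalIntegrable g volume 0 a) :
    ∫ x in 0..a, (∫ t in 0..x, g t) = (a / 2) • ∫ t in 0..a, g t := by
  set G : ℝ → E := fun x => ∫ t in 0..x, g t
  have hG : IntervalIntegrable G volume 0 a :=
    (continuousOn_primitive_interval' hg left_mem_uIcc).intervalIntegrable
  have hGrefl : IntervalIntegrable (fun x => G (a - x)) volume 0 a := by
    simpa using (hG.comp_sub_left a).symm
  have hpair : EqOn (fun x => G x + G (a - x)) (fun _ => ∫ t in 0..a, g t) (uIcc 0 a) := by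
    intro x hx
    have hax := sub_mem_uIcc_zero hx
    have htail : ∫ t in a - x..a, g t = G x := by
      simpa [hsymm] using (integral_comp_sub_left (fun t => g t) (a := 0) (b := x) a).symm
    show G x + G (a - x) = ∫ t in 0..a, g t
    rw [← htail, add_comm]
    exact integral_add_adjacent_intervals (hg.mono_set (uIcc_subset_uIcc left_mem_uIcc hax))
      (hg.mono_set (uIcc_subset_uIcc hax right_mem_uIcc))
  have hrefl : ∫ x in 0..a, G (a - x) = ∫ x in 0..a, G x := by
    simp [integral_comp_sub_left G a]
  calc ∫ x in 0..a, G x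
      = (2 : ℝ)⁻¹ • ∫ x in 0..a, (G x + G (a - x)) := by
        rw [integral_add hG hGrefl, hrefl, ← two_smul ℝ, smul_smul, inv_mul_cancel₀ two_ne_zero,
          one_smul]
    _ = (a / 2) • ∫ t in 0..a, g t := by
        rw [integral_congr hpair, intervalIntegral.integral_const, smul_smul, sub_zero,
          div_eq_inv_mul]

end Symmetric

lemma T_one_sub (f : ℝ → ℝ) (t : ℝ) : T f (1 - t) = T f t := by
  unfold T
  split_ifs with h₁ h₂ h₂
  · congr 2; linarith
  · congr 2; ring
  · congr 2; ring
  · linarith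

lemma T_eqOn_Iic_half (f : ℝ → ℝ) : EqOn (T f) (fun t => 2 * f (2 * t)) (Iic (1 / 2)) :=
  fun _ ht => if_pos ht

lemma uIcc_zero_half_subset_Iic : uIcc (0 : ℝ) (1 / 2) ⊆ Iic (1 / 2) := by
  rw [uIcc_of_le (by norm_num)]
  exact Icc_subset_Iic_self

lemma intervalIntegrable_T_left_half {f : ℝ → ℝ} (hf : IntervalIntegrable f volume 0 1) :
    IntervalIntegrable (T f) volume 0 (1 / 2) := by
  have hcomp : IntervalIntegrable (fun t => 2 * f (2 * t)) volume 0 (1 / 2) := by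
    simpa using (hf.comp_mul_left (c := 2)).const_mul 2
  exact hcomp.congr
    ((T_eqOn_Iic_half f).symm.mono (uIoc_subset_uIcc.trans uIcc_zero_half_subset_Iic))

lemma integral_T_left_half (f : ℝ → ℝ) :
    ∫ t in (0 : ℝ)..1 / 2, T f t = ∫ x in (0 : ℝ)..1, f x := by
  rw [integral_congr ((T_eqOn_Iic_half f).mono uIcc_zero_half_subset_Iic),
    intervalIntegral.integral_const_mul, integral_comp_mul_left f two_ne_zero]
  norm_num
  ring

/-- For any `f` integrable on `[0,1]`, `∫₀¹ S(f)(x) dx = ∫₀¹ f(x) dx`. -/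
theorem integral_Sf (f : ℝ → ℝ) (hf : IntervalIntegrable f volume 0 1) :
    (∫ x in (0:ℝ)..1, S f x) = ∫ x in (0:ℝ)..1, f x := by
  have hsymm : ∀ t, T f (1 - t) = T f t := T_one_sub f
  have hleft := intervalIntegrable_T_left_half hf
  have hT : IntervalIntegrable (T f) volume 0 1 :=
    hleft.trans (intervalIntegrable_right_half_of_symm (a := 1) hsymm hleft)
  calc ∫ x in (0:ℝ)..1, S f x
      = (1 / 2 : ℝ) • ∫ t in (0:ℝ)..1, T f t := integral_primitive_of_symm hsymm hT
    _ = ∫ x in (0:ℝ)..1, f x := by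
        rw [integral_eq_two_smul_integral_half_of_symm (a := 1) hsymm hleft, integral_T_left_half,
          smul_smul]
        norm_num
end

section
/- If f is continuous on [L,R] with L < R and ∫_L^R f(x) dx = 0, then max_{x∈[L,R]} |∫_L^x f(t) dt| ≤ (1/2)(R−L)·max_{x∈[L,R]} |f(x)|. -/
open MeasureTheory Set

/-- The primitive vanishes at both ends, so it grows at most like `M (x - a)` from the left end
and like `M (b - x)` from the right end; the smaller of the two is at most `M (b - a) / 2`. -/
theorem norm_integral_le_half_mul_of_integral_eq_zero {E : Type*} [NormedAddCommGroup E]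
    [NormedSpace ℝ E] {f : ℝ → E} {a b x M : ℝ} (hf : IntervalIntegrable f volume a b)
    (h0 : ∫ t in a..b, f t = 0) (hx : x ∈ Icc a b) (hM : ∀ t ∈ Ioc a b, ‖f t‖ ≤ M) :
    ‖∫ t in a..x, f t‖ ≤ (b - a) / 2 * M := by
  obtain ⟨hax, hxb⟩ := hx
  have hint_left : IntervalIntegrable f volume a x :=
    hf.mono_set (uIcc_subset_uIcc_left (mem_uIcc_of_le hax hxb))
  have hint_right : IntervalIntegrable f volume x b :=
    hf.mono_set (uIcc_subset_uIcc_right (mem_uIcc_of_le hax hxb))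
  have h_left : ‖∫ t in a..x, f t‖ ≤ M * (x - a) := by
    have := intervalIntegral.norm_integral_le_of_norm_le_const (a := a) (b := x) (C := M)
      fun t ht ↦ hM t (Ioc_subset_Ioc_right hxb (by rwa [uIoc_of_le hax] at ht))
    rwa [abs_of_nonneg (sub_nonneg.2 hax)] at this
  have h_right : ‖∫ t in x..b, f t‖ ≤ M * (b - x) := by
    have := intervalIntegral.norm_integral_le_of_norm_le_const (a := x) (b := b) (C := M)
      fun t ht ↦ hM t (Ioc_subset_Ioc_left hax (by rwa [uIoc_of_le hxb] at ht))
    rwa [abs_of_nonneg (sub_nonneg.2 hxb)] at this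
  have h_symm : ‖∫ t in a..x, f t‖ = ‖∫ t in x..b, f t‖ := by
    rw [← intervalIntegral.integral_add_adjacent_intervals hint_left hint_right,
      add_eq_zero_iff_eq_neg] at h0
    rw [h0, norm_neg]
  linarith

/-- If `f` is continuous on `[L,R]` with zero integral, then the maximum of
`|∫_L^x f(t) dt|` over `[L,R]` is at most `(1/2)(R-L)` times the maximum of `|f|`. -/
theorem max_integral_le (L R : ℝ) (hLR : L < R) (f : ℝ → ℝ)
    (hf : ContinuousOn f (Set.Icc L R))
    (h0 : (∫ x in L..R, f x) = 0) :
    sSup ((fun x => |∫ t in L..x, f t|) '' Set.Icc L R) ≤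
      1 / 2 * (R - L) * sSup ((fun x => |f x|) '' Set.Icc L R) := by
  have hbdd : BddAbove ((fun x => |f x|) '' Icc L R) :=
    (isCompact_Icc.image_of_continuousOn hf.abs).bddAbove
  refine csSup_le ((nonempty_Icc.2 hLR.le).image _) ?_
  rintro _ ⟨x, hx, rfl⟩
  have := norm_integral_le_half_mul_of_integral_eq_zero (hf.intervalIntegrable_of_Icc hLR.le) h0
    hx fun t ht ↦ le_csSup hbdd (mem_image_of_mem _ (Ioc_subset_Icc_self ht))
  rw [Real.norm_eq_abs] at this
  linarith
end

section
/- If g and h are continuous on [0,1] and ∫₀¹ g(x) dx = ∫₀¹ h(x) dx, then max_{x∈[0,1]} |S(g)(x) − S(h)(x)| = max_{x∈[0,1]} |∫₀ˣ (g(u) − h(u)) du|. -/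
open MeasureTheory

/-! `T` is composition with the tent map `x ↦ 1 - |1 - 2x|`, which folds `[0,1]` onto itself
twice. On `[0,1/2]` the substitution `u = 2x` turns `S f` into `∫₀^{2x} f`; on `[1/2,1]` the
substitution `u = 2 - 2x` gives `2∫₀¹ f - ∫₀^{2-2x} f`. For `f = g - h` the constant term vanishes,
so `|S g - S h| = |F ∘ tent|` on `[0,1]` with `F y = ∫₀^y (g - h)`, and both sides are suprema of
the same set because the tent map sends `[0,1]` onto `[0,1]`. -/

def tent (x : ℝ) : ℝ := 1 - |1 - 2 * x|

lemma tent_of_le_half {x : ℝ} (hx : x ≤ 1 / 2) : tent x = 2 * x := by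
  rw [tent, abs_of_nonneg (by linarith)]; ring

lemma tent_of_half_le {x : ℝ} (hx : 1 / 2 ≤ x) : tent x = 2 - 2 * x := by
  rw [tent, abs_of_nonpos (by linarith)]; ring

lemma mapsTo_tent_Icc : Set.MapsTo tent (Set.Icc 0 1) (Set.Icc 0 1) := fun x hx => by
  rcases le_total x (1 / 2) with hx' | hx'
  · rw [tent_of_le_half hx']; constructor <;> linarith [hx.1]
  · rw [tent_of_half_le hx']; constructor <;> linarith [hx.2]

lemma tent_image_Icc : tent '' Set.Icc 0 1 = Set.Icc 0 1 := by
  refine (mapsTo_tent_Icc.image_subset).antisymm fun y hy => ⟨y / 2, ?_, ?_⟩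
  · constructor <;> linarith [hy.1, hy.2]
  · rw [tent_of_le_half (by linarith [hy.2])]; ring

lemma T_eq_comp_tent (f : ℝ → ℝ) (x : ℝ) : T f x = 2 * f (tent x) := by
  unfold T
  split_ifs with hx
  · rw [tent_of_le_half hx]
  · rw [tent_of_half_le (by linarith)]

lemma T_of_half_le (f : ℝ → ℝ) {x : ℝ} (hx : 1 / 2 ≤ x) : T f x = 2 * f (2 - 2 * x) := by
  rw [T_eq_comp_tent, tent_of_half_le hx]

lemma continuousOn_T {f : ℝ → ℝ} (hf : ContinuousOn f (Set.Icc 0 1)) :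
    ContinuousOn (T f) (Set.Icc 0 1) := by
  simp_rw [funext (T_eq_comp_tent f)]
  exact continuousOn_const.mul (hf.comp (by unfold tent; fun_prop) mapsTo_tent_Icc)

lemma intervalIntegrable_T {f : ℝ → ℝ} (hf : ContinuousOn f (Set.Icc 0 1)) {a b : ℝ}
    (ha : a ∈ Set.Icc (0 : ℝ) 1) (hb : b ∈ Set.Icc (0 : ℝ) 1) :
    IntervalIntegrable (T f) volume a b :=
  ((continuousOn_T hf).mono (Set.uIcc_subset_Icc ha hb)).intervalIntegrable

lemma S_sub {g h : ℝ → ℝ} (hg : ContinuousOn g (Set.Icc 0 1))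
    (hh : ContinuousOn h (Set.Icc 0 1)) {x : ℝ} (hx : x ∈ Set.Icc (0 : ℝ) 1) :
    S (g - h) x = S g x - S h x := by
  have h0 : (0 : ℝ) ∈ Set.Icc (0 : ℝ) 1 := ⟨le_rfl, zero_le_one⟩
  rw [S, S, S, ← intervalIntegral.integral_sub (intervalIntegrable_T hg h0 hx)
    (intervalIntegrable_T hh h0 hx)]
  congr 1 with t
  simp only [T, Pi.sub_apply]
  split_ifs <;> ring

lemma S_of_le_half (f : ℝ → ℝ) {x : ℝ} (hx : x ≤ 1 / 2) :
    S f x = ∫ u in (0:ℝ)..(2 * x), f u := by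
  have hT : ∀ t ∈ Set.uIcc 0 x, T f t = 2 * f (2 * t) := fun t ht =>
    if_pos (ht.2.trans (max_le (by norm_num) hx))
  rw [S, intervalIntegral.integral_congr hT, intervalIntegral.integral_const_mul,
    intervalIntegral.integral_comp_mul_left f two_ne_zero, mul_zero, smul_eq_mul,
    mul_inv_cancel_left₀ two_ne_zero]

lemma S_of_half_le {f : ℝ → ℝ} (hf : ContinuousOn f (Set.Icc 0 1)) {x : ℝ}
    (hx : x ∈ Set.Icc (1 / 2 : ℝ) 1) :
    S f x = 2 * (∫ u in (0:ℝ)..1, f u) - ∫ u in (0:ℝ)..(2 - 2 * x), f u := by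
  have hhalf : (1 / 2 : ℝ) ∈ Set.Icc (0 : ℝ) 1 := by norm_num
  have hx' : x ∈ Set.Icc (0 : ℝ) 1 := ⟨by linarith [hx.1], hx.2⟩
  have first_half : S f (1 / 2) = ∫ u in (0:ℝ)..1, f u := by
    rw [S_of_le_half f le_rfl]; norm_num
  have second_half : (∫ t in (1 / 2 : ℝ)..x, T f t) = ∫ u in (2 - 2 * x)..1, f u := by
    have hT : ∀ t ∈ Set.uIcc (1 / 2) x, T f t = 2 * f (2 - 2 * t) := fun t ht =>
      T_of_half_le f ((le_min le_rfl hx.1).trans ht.1)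
    rw [intervalIntegral.integral_congr hT, intervalIntegral.integral_const_mul,
      intervalIntegral.integral_comp_sub_mul f two_ne_zero, smul_eq_mul,
      mul_inv_cancel_left₀ two_ne_zero]
    norm_num
  have hsub : (∫ u in (0:ℝ)..1, f u) - (∫ u in (0:ℝ)..(2 - 2 * x), f u)
      = ∫ u in (2 - 2 * x)..1, f u :=
    intervalIntegral.integral_interval_sub_left (hf.intervalIntegrable_of_Icc zero_le_one)
      ((hf.mono (Set.Icc_subset_Icc le_rfl (by linarith [hx.1]))).intervalIntegrable_of_Icc
        (by linarith [hx.2]))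
  rw [S, ← intervalIntegral.integral_add_adjacent_intervals
    (intervalIntegrable_T hf ⟨le_rfl, zero_le_one⟩ hhalf) (intervalIntegrable_T hf hhalf hx'),
    ← S, first_half, second_half, ← hsub]
  ring

lemma abs_S_eq_comp_tent {f : ℝ → ℝ} (hf : ContinuousOn f (Set.Icc 0 1))
    (hf0 : ∫ u in (0:ℝ)..1, f u = 0) {x : ℝ} (hx : x ∈ Set.Icc (0 : ℝ) 1) :
    |S f x| = |∫ u in (0:ℝ)..(tent x), f u| := by
  rcases le_total x (1 / 2) with hx' | hx'
  · rw [S_of_le_half f hx', tent_of_le_half hx']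
  · rw [S_of_half_le hf ⟨hx', hx.2⟩, tent_of_half_le hx', hf0, mul_zero, zero_sub, abs_neg]

/-- If `g` and `h` are continuous on `[0,1]` with the same integral, then
`max_{x∈[0,1]} |S(g)(x) − S(h)(x)| = max_{x∈[0,1]} |∫₀ˣ (g(u) − h(u)) du|`. -/
theorem max_S_sub_S (g h : ℝ → ℝ)
    (hg : ContinuousOn g (Set.Icc 0 1)) (hh : ContinuousOn h (Set.Icc 0 1))
    (hint : (∫ x in (0:ℝ)..1, g x) = ∫ x in (0:ℝ)..1, h x) :
    sSup ((fun x => |S g x - S h x|) '' Set.Icc 0 1) =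
      sSup ((fun x => |∫ u in (0:ℝ)..x, (g u - h u)|) '' Set.Icc 0 1) := by
  have hgh : ContinuousOn (g - h) (Set.Icc 0 1) := hg.sub hh
  have hgh0 : ∫ u in (0:ℝ)..1, (g - h) u = 0 := by
    simp only [Pi.sub_apply]
    rw [intervalIntegral.integral_sub (hg.intervalIntegrable_of_Icc zero_le_one)
      (hh.intervalIntegrable_of_Icc zero_le_one), hint, sub_self]
  have hcomp : Set.EqOn (fun x => |S g x - S h x|)
      ((fun y => |∫ u in (0:ℝ)..y, (g u - h u)|) ∘ tent) (Set.Icc 0 1) := fun x hx => by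
    dsimp only [Function.comp_apply]
    rw [← S_sub hg hh hx, abs_S_eq_comp_tent hgh hgh0 hx]
    rfl
  rw [hcomp.image_eq, Set.image_comp, tent_image_Icc]
end

section
/- For each real number A, there exists a unique continuous function f : [0,1] → ℝ with ∫₀¹ f(x) dx = A satisfying f(x) = ∫₀ˣ T(f)(t) dt for all x ∈ [0,1]; equivalently, a unique solution of the self-similar differential equation f′(x) = 2f(2x) on [0,1/2], f′(x) = 2f(2−2x) on (1/2,1], with f(0) = 0 and ∫₀¹ f = A. -/
/-!
Write `S f x = ∫₀ˣ T f`. Substituting `2t` and `2 - 2t` gives `S f x = F (2x)` for `x ≤ 1/2`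
and `S f x = 2 F 1 - F (2 - 2x)` for `x ≥ 1/2`, where `F` is the primitive of `f`. Hence `S`
preserves `∫₀¹`, and if `∫₀¹ h = 0` then `|S h| ≤ sup |h| / 2`, because the primitive of such an
`h` vanishes at both ends of `[0,1]`. So `S` is a `1/2`-contraction of the closed set
`{f : ∫₀¹ f = A}` of `C([0,1], ℝ)`, and the Banach fixed point theorem gives existence and
uniqueness.
-/

open MeasureTheory

open Set intervalIntegral
open scoped Interval

namespace SSDE

noncomputable def S (f : ℝ → ℝ) (x : ℝ) : ℝ := ∫ t in (0:ℝ)..x, T f t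

variable {f g : ℝ → ℝ}

lemma T_sub (f g : ℝ → ℝ) : T (f - g) = T f - T g := by
  funext x
  simp only [T, Pi.sub_apply]
  split_ifs <;> ring

lemma T_eqOn_of_eqOn (h : EqOn f g (Icc 0 1)) : EqOn (T f) (T g) (Icc 0 1) := by
  intro t ht
  unfold T
  split_ifs
  · rw [h ⟨by linarith [ht.1], by linarith⟩]
  · rw [h ⟨by linarith [ht.2], by linarith⟩]

lemma intervalIntegrable_T (hf : Continuous f) (a b : ℝ) :
    IntervalIntegrable (T f) volume a b := by
  have hl : IntervalIntegrable (fun t => 2 * f (2 * t)) volume a b := by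
    apply Continuous.intervalIntegrable; fun_prop
  have hr : IntervalIntegrable (fun t => 2 * f (2 - 2 * t)) volume a b := by
    apply Continuous.intervalIntegrable; fun_prop
  have hT : T f = (Iic (1/2 : ℝ)).piecewise (fun t => 2 * f (2 * t)) (fun t => 2 * f (2 - 2 * t)) :=
    funext fun t => by simp only [T, piecewise, mem_Iic]
  rw [hT]
  exact intervalIntegrable_iff.2 <|
    Integrable.piecewise measurableSet_Iic hl.def'.integrableOn hr.def'.integrableOn

lemma S_of_le_half (f : ℝ → ℝ) {x : ℝ} (hx : x ≤ 1/2) : S f x = ∫ t in (0:ℝ)..2 * x, f t := by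
  have hT : EqOn (T f) (fun t => 2 * f (2 * t)) [[0, x]] := fun t ht =>
    if_pos (ht.2.trans (sup_le (by norm_num) hx))
  rw [S, integral_congr hT, intervalIntegral.integral_const_mul,
    integral_comp_mul_left _ two_ne_zero]
  simp

lemma S_of_half_le (hf : Continuous f) {x : ℝ} (hx : 1/2 ≤ x) :
    S f x = 2 * (∫ t in (0:ℝ)..1, f t) - ∫ t in (0:ℝ)..2 - 2 * x, f t := by
  have hT : ∀ᵐ t ∂volume, t ∈ Ι (1/2 : ℝ) x → T f t = 2 * f (2 - 2 * t) :=
    ae_of_all _ fun t ht => if_neg (not_le.2 (lt_of_le_of_lt (le_inf le_rfl hx) ht.1))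
  have hleft : S f (1/2) = ∫ t in (0:ℝ)..1, f t := by
    rw [S_of_le_half f le_rfl]
    norm_num
  have hright : ∫ t in (1/2 : ℝ)..x, T f t = ∫ t in 2 - 2 * x..1, f t := by
    rw [integral_congr_ae hT, intervalIntegral.integral_const_mul,
      integral_comp_sub_mul _ two_ne_zero, smul_eq_mul, mul_inv_cancel_left₀ two_ne_zero]
    norm_num
  rw [S, ← integral_add_adjacent_intervals (intervalIntegrable_T hf 0 (1/2))
    (intervalIntegrable_T hf (1/2) x), ← S, hleft, hright,
    ← integral_interval_sub_left (hf.intervalIntegrable 0 1)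
      (hf.intervalIntegrable 0 (2 - 2 * x))]
  ring

lemma continuous_S (hf : Continuous f) : Continuous (S f) :=
  continuous_primitive (intervalIntegrable_T hf) 0

lemma integral_S (hf : Continuous f) : ∫ x in (0:ℝ)..1, S f x = ∫ x in (0:ℝ)..1, f x := by
  set F : ℝ → ℝ := fun y => ∫ t in (0:ℝ)..y, f t
  have hF : Continuous F := continuous_primitive hf.intervalIntegrable 0
  have hl : EqOn (S f) (fun x => F (2 * x)) [[0, 1/2]] := fun x hx =>
    S_of_le_half f (hx.2.trans (by norm_num))
  have hr : EqOn (S f) (fun x => 2 * F 1 - F (2 - 2 * x)) [[1/2, 1]] := fun x hx =>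
    S_of_half_le hf (le_trans (by norm_num) hx.1)
  have hSi := (continuous_S hf).intervalIntegrable (μ := volume)
  have hFi : IntervalIntegrable (fun x => F (2 - 2 * x)) volume (1/2) 1 :=
    (by fun_prop : Continuous fun x => F (2 - 2 * x)).intervalIntegrable _ _
  -- after the substitutions `2x` and `2 - 2x` both halves contribute `∫₀¹ F / 2`, which cancel
  rw [← integral_add_adjacent_intervals (hSi 0 (1/2)) (hSi (1/2) 1), integral_congr hl,
    integral_congr hr, integral_sub intervalIntegrable_const hFi,
    integral_comp_mul_left _ two_ne_zero, integral_comp_sub_mul _ two_ne_zero]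
  norm_num
  ring

lemma S_sub (hf : Continuous f) (hg : Continuous g) : S (f - g) = S f - S g := by
  funext x
  simp only [S, T_sub, Pi.sub_apply]
  exact integral_sub (intervalIntegrable_T hf 0 x) (intervalIntegrable_T hg 0 x)

lemma S_eqOn_of_eqOn (h : EqOn f g (Icc 0 1)) : EqOn (S f) (S g) (Icc 0 1) := fun _ hx =>
  integral_congr fun _ ht => T_eqOn_of_eqOn h <|
    (uIcc_subset_Icc ⟨le_rfl, zero_le_one⟩ hx) ht

lemma abs_integral_le_half_of_integral_eq_zero {h : ℝ → ℝ}
    (hh : IntervalIntegrable h volume 0 1) (h0 : ∫ t in (0:ℝ)..1, h t = 0) {d : ℝ}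
    (hd : ∀ t ∈ Icc (0:ℝ) 1, |h t| ≤ d) {y : ℝ} (hy : y ∈ Icc (0:ℝ) 1) :
    |∫ t in (0:ℝ)..y, h t| ≤ d / 2 := by
  have hbound : ∀ a b, 0 ≤ a → a ≤ b → b ≤ 1 → |∫ t in a..b, h t| ≤ d * (b - a) := by
    intro a b ha hab hb
    have hle : ∀ t ∈ Ι a b, ‖h t‖ ≤ d := fun t ht => by
      rw [uIoc_of_le hab] at ht
      exact hd t ⟨ha.trans ht.1.le, ht.2.trans hb⟩
    simpa only [Real.norm_eq_abs, abs_of_nonneg (sub_nonneg.2 hab)] using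
      norm_integral_le_of_norm_le_const hle
  -- the primitive vanishes at `0` and at `1`, so it is bounded by both `d y` and `d (1 - y)`
  have hsplit : ∫ t in (0:ℝ)..y, h t = -∫ t in y..1, h t := by
    have hy' : y ∈ [[(0:ℝ), 1]] := by rwa [uIcc_of_le zero_le_one]
    rw [← integral_interval_sub_left hh (hh.mono_set (uIcc_subset_uIcc_left hy')), h0,
      zero_sub, neg_neg]
  have h₁ := hbound 0 y le_rfl hy.1 hy.2
  have h₂ := hbound y 1 hy.1 hy.2 le_rfl
  rw [← abs_neg, ← hsplit] at h₂
  linarith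

lemma abs_S_le_half {h : ℝ → ℝ} (hh : Continuous h) (h0 : ∫ t in (0:ℝ)..1, h t = 0) {d : ℝ}
    (hd : ∀ t ∈ Icc (0:ℝ) 1, |h t| ≤ d) {x : ℝ} (hx : x ∈ Icc (0:ℝ) 1) : |S h x| ≤ d / 2 := by
  have hbound {y : ℝ} (hy : y ∈ Icc (0:ℝ) 1) : |∫ t in (0:ℝ)..y, h t| ≤ d / 2 :=
    abs_integral_le_half_of_integral_eq_zero (hh.intervalIntegrable 0 1) h0 hd hy
  rcases le_total x (1/2) with hx' | hx'
  · rw [S_of_le_half h hx']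
    exact hbound ⟨by linarith [hx.1], by linarith⟩
  · rw [S_of_half_le hh hx', h0, mul_zero, zero_sub, abs_neg]
    exact hbound ⟨by linarith [hx.2], by linarith⟩

noncomputable def extend (u : C(Icc (0:ℝ) 1, ℝ)) : ℝ → ℝ := IccExtend zero_le_one u

lemma continuous_extend (u : C(Icc (0:ℝ) 1, ℝ)) : Continuous (extend u) :=
  u.continuous.Icc_extend'

lemma extend_apply (u : C(Icc (0:ℝ) 1, ℝ)) {x : ℝ} (hx : x ∈ Icc (0:ℝ) 1) :
    extend u x = u ⟨x, hx⟩ :=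
  IccExtend_of_mem _ _ hx

noncomputable def mean (u : C(Icc (0:ℝ) 1, ℝ)) : ℝ := ∫ x in (0:ℝ)..1, extend u x

lemma mean_eq_of_eqOn {u : C(Icc (0:ℝ) 1, ℝ)} (h : EqOn (extend u) f (Icc 0 1)) :
    mean u = ∫ x in (0:ℝ)..1, f x :=
  integral_congr (by rwa [uIcc_of_le zero_le_one])

lemma continuous_mean : Continuous mean :=
  continuous_parametric_intervalIntegral_of_continuous' (f := extend)
    (continuous_eval.comp <| continuous_fst.prodMk <|
      (continuous_projIcc (h := zero_le_one)).comp continuous_snd) 0 1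

noncomputable def Smap (u : C(Icc (0:ℝ) 1, ℝ)) : C(Icc (0:ℝ) 1, ℝ) :=
  ContinuousMap.restrict (Icc 0 1) ⟨S (extend u), continuous_S (continuous_extend u)⟩

lemma Smap_apply (u : C(Icc (0:ℝ) 1, ℝ)) (x : Icc (0:ℝ) 1) : Smap u x = S (extend u) x := rfl

lemma mean_Smap (u : C(Icc (0:ℝ) 1, ℝ)) : mean (Smap u) = mean u :=
  (mean_eq_of_eqOn fun _ hx => extend_apply _ hx).trans (integral_S (continuous_extend u))

lemma dist_Smap_le {u v : C(Icc (0:ℝ) 1, ℝ)} (h : mean u = mean v) :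
    dist (Smap u) (Smap v) ≤ 1/2 * dist u v := by
  have hu := continuous_extend u
  have hv := continuous_extend v
  refine (ContinuousMap.dist_le (by positivity)).2 fun x => ?_
  rw [Real.dist_eq, Smap_apply, Smap_apply, ← Pi.sub_apply (S _), ← S_sub hu hv, mul_comm,
    ← div_eq_mul_one_div]
  refine abs_S_le_half (hu.sub hv) ?_ (fun t ht => ?_) x.2
  · rw [Pi.sub_def, integral_sub (hu.intervalIntegrable 0 1) (hv.intervalIntegrable 0 1)]
    exact sub_eq_zero.2 h
  · rw [Pi.sub_apply, extend_apply u ht, extend_apply v ht, ← Real.dist_eq]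
    exact ContinuousMap.dist_apply_le_dist _

lemma eq_of_Smap_eq_self {u v : C(Icc (0:ℝ) 1, ℝ)} (hu : Smap u = u) (hv : Smap v = v)
    (h : mean u = mean v) : u = v := by
  have hle := dist_Smap_le h
  rw [hu, hv] at hle
  exact dist_le_zero.1 (by linarith [dist_nonneg (x := u) (y := v)])

lemma exists_Smap_eq_self (A : ℝ) : ∃ u, mean u = A ∧ Smap u = u := by
  have hmaps : MapsTo Smap (mean ⁻¹' {A}) (mean ⁻¹' {A}) := fun u hu => (mean_Smap u).trans hu
  have hcontr : ContractingWith (1/2) (hmaps.restrict Smap _ _) := by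
    refine ⟨by norm_num, LipschitzWith.of_dist_le_mul fun u v => ?_⟩
    rw [Subtype.dist_eq, Subtype.dist_eq]
    exact_mod_cast dist_Smap_le (u.2.trans v.2.symm)
  have hA : ContinuousMap.const _ A ∈ mean ⁻¹' {A} := by simp [mean, extend, IccExtend_apply]
  obtain ⟨u, hu, hfix, -⟩ := hcontr.exists_fixedPoint'
    (isClosed_singleton.preimage continuous_mean).isComplete hmaps hA (edist_ne_top _ _)
  exact ⟨u, hu, hfix⟩

end SSDE

open SSDE

/-- For each real `A` there is a unique continuous `f` on `[0,1]` with `∫₀¹ f = A`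
satisfying `f(x) = ∫₀ˣ T(f)(t) dt` on `[0,1]` (the SSDE `f' = T(f)`, `f(0) = 0`),
uniqueness being up to equality on `[0,1]`. -/
theorem exists_unique_ssde_solution (A : ℝ) :
    ∃ f : ℝ → ℝ,
      (ContinuousOn f (Set.Icc 0 1) ∧ (∫ x in (0:ℝ)..1, f x) = A ∧
        ∀ x ∈ Set.Icc (0:ℝ) 1, f x = ∫ t in (0:ℝ)..x, T f t) ∧
      ∀ g : ℝ → ℝ,
        (ContinuousOn g (Set.Icc 0 1) ∧ (∫ x in (0:ℝ)..1, g x) = A ∧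
          ∀ x ∈ Set.Icc (0:ℝ) 1, g x = ∫ t in (0:ℝ)..x, T g t) →
        Set.EqOn g f (Set.Icc 0 1) := by
  obtain ⟨u, huA, hu⟩ := exists_Smap_eq_self A
  refine ⟨extend u, ⟨(continuous_extend u).continuousOn, huA, fun x hx => ?_⟩, ?_⟩
  · rw [extend_apply u hx]
    exact (DFunLike.congr_fun hu ⟨x, hx⟩).symm
  rintro g ⟨hgc, hgA, hg⟩
  set v : C(Icc (0:ℝ) 1, ℝ) := ⟨(Icc 0 1).domRestrict g, hgc.domRestrict⟩
  have hvg : EqOn (extend v) g (Icc 0 1) := fun x hx => extend_apply v hx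
  have hv : Smap v = v := ContinuousMap.ext fun x => (S_eqOn_of_eqOn hvg x.2).trans (hg x x.2).symm
  have hvu : v = u := eq_of_Smap_eq_self hv hu ((mean_eq_of_eqOn hvg).trans (hgA.trans huA.symm))
  intro x hx
  rw [← hvg hx, hvu, extend_apply u hx]
end

section
/- Let x₀ < x₁ < ⋯ < xₙ, let y₀ ∈ ℝ, and let P be a linear piecemealing with data (a_i, d_i, e_i, f_i) satisfying Σ_{i=1}^{n} (a_i³ d_i)/|a_i| = 0. If g and h are continuous on [x₀,xₙ] with ∫_{x₀}^{xₙ} g(x) dx = ∫_{x₀}^{xₙ} h(x) dx, then F_{y₀}(g)(x_k) = F_{y₀}(h)(x_k) for every k = 1,…,n, and consequently for x ∈ [x_{i−1}, x_i], F_{y₀}(g)(x) − F_{y₀}(h)(x) = a_i d_i · ∫_{(x_{i−1}−e_i)/a_i}^{(x−e_i)/a_i} (g(u) − h(u)) du. -/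
/-!
On the `i`-th piece the constants `fᵢ` cancel in `P(g) - P(h) = dᵢ (g - h)((t - eᵢ)/aᵢ)`, so the
substitution `u = (t - eᵢ)/aᵢ` turns `∫_{x_{i-1}}^{z} (P(g) - P(h))` into
`aᵢ dᵢ ∫_{(x_{i-1} - eᵢ)/aᵢ}^{(z - eᵢ)/aᵢ} (g - h)`. For `z = xᵢ` the new interval is `[x₀, xₙ]`,
traversed forwards or backwards according to the sign of `aᵢ`, over which `g - h` has integral zero.
Hence `P(g)` and `P(h)` have equal integrals over every piece, so `F_{y₀}(g)` and `F_{y₀}(h)` agree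
at the nodes, and on `[x_{i-1}, xᵢ]` their difference is the substituted integral.
-/

open MeasureTheory Set intervalIntegral

section AffinePiece

variable {p q L R a e : ℝ}

theorem affine_piece_endpoints (ha : a ≠ 0)
    (hmap : (0 < a → a = (q - p) / (R - L) ∧ e = q - a * R) ∧
      (a < 0 → a = (p - q) / (R - L) ∧ e = q - a * L)) :
    ((p - e) / a = L ∧ (q - e) / a = R) ∨ ((p - e) / a = R ∧ (q - e) / a = L) := by
  have hscale : ∀ {s}, a = s / (R - L) → a * (R - L) = s := fun {s} has => by
    have hRL : R - L ≠ 0 := fun h0 => ha (by rw [has, h0, div_zero])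
    rw [has, div_mul_cancel₀ _ hRL]
  rcases ha.lt_or_gt with hneg | hpos
  · obtain ⟨has, rfl⟩ := hmap.2 hneg
    have hscaled := hscale has
    right
    constructor <;> rw [div_eq_iff ha] <;> linarith
  · obtain ⟨has, rfl⟩ := hmap.1 hpos
    have hscaled := hscale has
    left
    constructor <;> rw [div_eq_iff ha] <;> linarith

theorem mapsTo_affine_piece
    (hend : ((p - e) / a = L ∧ (q - e) / a = R) ∨ ((p - e) / a = R ∧ (q - e) / a = L)) :
    MapsTo (fun t => (t - e) / a) (Icc p q) (uIcc L R) := by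
  intro t ht
  have hmem : (t - e) / a ∈ uIcc ((p - e) / a) ((q - e) / a) := by
    rw [← image_div_const_uIcc, ← image_sub_const_uIcc]
    exact ⟨t - e, ⟨t, Icc_subset_uIcc ht, rfl⟩, rfl⟩
  rcases hend with ⟨hp, hq⟩ | ⟨hp, hq⟩
  · rwa [hp, hq] at hmem
  · rwa [hp, hq, uIcc_comm] at hmem

theorem integral_affine_piece_eq_zero {φ : ℝ → ℝ}
    (hend : ((p - e) / a = L ∧ (q - e) / a = R) ∨ ((p - e) / a = R ∧ (q - e) / a = L))
    (hφ : ∫ u in L..R, φ u = 0) :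
    ∫ u in ((p - e) / a)..((q - e) / a), φ u = 0 := by
  rcases hend with ⟨hp, hq⟩ | ⟨hp, hq⟩
  · rw [hp, hq, hφ]
  · rw [hp, hq, integral_symm, hφ, neg_zero]

theorem integral_const_mul_comp_affine (ha : a ≠ 0) (d : ℝ) (φ : ℝ → ℝ) (p z : ℝ) :
    ∫ t in p..z, d * φ ((t - e) / a) = a * d * ∫ u in ((p - e) / a)..((z - e) / a), φ u := by
  simp only [sub_div]
  rw [intervalIntegral.integral_const_mul, integral_comp_div_sub φ ha, smul_eq_mul]
  ring

end AffinePiece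

section IntegralOnPiece

variable {p q L R a d e f : ℝ} {g h Pg Ph : ℝ → ℝ}

theorem intervalIntegrable_of_eqOn_Ico_comp_affine (hpq : p ≤ q)
    (hg : ContinuousOn g (uIcc L R)) (hmaps : MapsTo (fun t => (t - e) / a) (Icc p q) (uIcc L R))
    (hPg : EqOn Pg (fun t => d * g ((t - e) / a) + f) (Ico p q)) :
    IntervalIntegrable Pg volume p q := by
  have hcont : ContinuousOn (fun t => d * g ((t - e) / a) + f) (uIcc p q) := by
    rw [uIcc_of_le hpq]
    exact (continuousOn_const.mul (hg.comp (by fun_prop) hmaps)).add continuousOn_const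
  refine hcont.intervalIntegrable.congr_uIoo fun t ht => (hPg ?_).symm
  rw [uIoo_of_le hpq] at ht
  exact Ioo_subset_Ico_self ht

theorem integral_sub_eq_of_eqOn_Ico_comp_affine (ha : a ≠ 0) {z : ℝ} (hz : z ∈ Icc p q)
    (hPg : EqOn Pg (fun t => d * g ((t - e) / a) + f) (Ico p q))
    (hPh : EqOn Ph (fun t => d * h ((t - e) / a) + f) (Ico p q))
    (hPgi : IntervalIntegrable Pg volume p q) (hPhi : IntervalIntegrable Ph volume p q) :
    (∫ t in p..z, Pg t) - ∫ t in p..z, Ph t =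
      a * d * ∫ u in ((p - e) / a)..((z - e) / a), (g u - h u) := by
  have hsub : uIcc p z ⊆ uIcc p q := uIcc_subset_uIcc_left (Icc_subset_uIcc hz)
  rw [← integral_sub (hPgi.mono_set hsub) (hPhi.mono_set hsub),
    ← integral_const_mul_comp_affine ha]
  refine integral_congr_Ioo_of_le hz.1 fun t ht => ?_
  have ht' : t ∈ Ico p q := ⟨ht.1.le, ht.2.trans_le hz.2⟩
  simp only [hPg ht', hPh ht']
  ring

end IntegralOnPiece

section Partition

variable {E : Type*} [NormedAddCommGroup E] [NormedSpace ℝ E] {μ : Measure ℝ} {x : ℕ → ℝ}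
  {F G : ℝ → E} {n : ℕ}
  (hF : ∀ j < n, IntervalIntegrable F μ (x j) (x (j + 1)))
  (hG : ∀ j < n, IntervalIntegrable G μ (x j) (x (j + 1)))
  (heq : ∀ j < n, ∫ t in (x j)..(x (j + 1)), F t ∂μ = ∫ t in (x j)..(x (j + 1)), G t ∂μ)
include hF hG heq

theorem integral_eq_of_integral_eq_on_pieces {k : ℕ} (hk : k ≤ n) :
    ∫ t in (x 0)..(x k), F t ∂μ = ∫ t in (x 0)..(x k), G t ∂μ := by
  rw [← sum_integral_adjacent_intervals fun j hj => hF j (by omega),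
    ← sum_integral_adjacent_intervals fun j hj => hG j (by omega)]
  exact Finset.sum_congr rfl fun j hj => heq j (by grind)

theorem integral_sub_eq_of_integral_eq_on_pieces {j : ℕ} (hj : j < n) {z : ℝ}
    (hz : z ∈ Icc (x j) (x (j + 1))) :
    (∫ t in (x 0)..z, F t ∂μ) - ∫ t in (x 0)..z, G t ∂μ =
      (∫ t in (x j)..z, F t ∂μ) - ∫ t in (x j)..z, G t ∂μ := by
  have hsub : uIcc (x j) z ⊆ uIcc (x j) (x (j + 1)) := uIcc_subset_uIcc_left (Icc_subset_uIcc hz)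
  have hF0 : IntervalIntegrable F μ (x 0) (x j) := .trans_iterate fun k hk => hF k (by omega)
  have hG0 : IntervalIntegrable G μ (x 0) (x j) := .trans_iterate fun k hk => hG k (by omega)
  rw [← integral_add_adjacent_intervals hF0 ((hF j hj).mono_set hsub),
    ← integral_add_adjacent_intervals hG0 ((hG j hj).mono_set hsub),
    integral_eq_of_integral_eq_on_pieces hF hG heq hj.le]
  abel

end Partition

theorem fractal_transform_difference_general (n : ℕ)
    (x a d e f : ℕ → ℝ)
    (hx : ∀ j < n, x j < x (j + 1))
    (ha : ∀ i ∈ Finset.Icc 1 n, a i ≠ 0)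
    (hmap : ∀ i ∈ Finset.Icc 1 n,
      (0 < a i → a i = (x i - x (i - 1)) / (x n - x 0) ∧ e i = x i - a i * x n) ∧
      (a i < 0 → a i = (x (i - 1) - x i) / (x n - x 0) ∧ e i = x i - a i * x 0))
    (y₀ : ℝ) (g h Pg Ph : ℝ → ℝ)
    (hg : ContinuousOn g (Set.Icc (x 0) (x n)))
    (hh : ContinuousOn h (Set.Icc (x 0) (x n)))
    (hint : (∫ z in (x 0)..(x n), g z) = ∫ z in (x 0)..(x n), h z)
    (hPg : ∀ i ∈ Finset.Icc 1 n, ∀ z ∈ Set.Ico (x (i - 1)) (x i),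
      Pg z = d i * g ((z - e i) / a i) + f i)
    (hPh : ∀ i ∈ Finset.Icc 1 n, ∀ z ∈ Set.Ico (x (i - 1)) (x i),
      Ph z = d i * h ((z - e i) / a i) + f i) :
    (∀ k ∈ Finset.Icc 1 n,
      y₀ + (∫ t in (x 0)..(x k), Pg t) = y₀ + ∫ t in (x 0)..(x k), Ph t) ∧
    ∀ i ∈ Finset.Icc 1 n, ∀ z ∈ Set.Icc (x (i - 1)) (x i),
      (y₀ + ∫ t in (x 0)..z, Pg t) - (y₀ + ∫ t in (x 0)..z, Ph t) =
        a i * d i * ∫ u in ((x (i - 1) - e i) / a i)..((z - e i) / a i), (g u - h u) := by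
  have hx0n : x 0 ≤ x n :=
    (strictMonoOn_Iic_of_lt_succ hx).monotoneOn (by simp) (by simp) n.zero_le
  rw [← uIcc_of_le hx0n] at hg hh
  have hgh : ∫ u in (x 0)..(x n), (g u - h u) = 0 := by
    rw [integral_sub hg.intervalIntegrable hh.intervalIntegrable, hint, sub_self]
  -- Piece `i = j + 1` is `[x j, x (j + 1)]`: `j + 1 - 1` reduces to `j` definitionally.
  have hi : ∀ j < n, j + 1 ∈ Finset.Icc 1 n := fun j hj => Finset.mem_Icc.2 ⟨by omega, hj⟩
  have hend := fun j (hj : j < n) => affine_piece_endpoints (ha _ (hi j hj)) (hmap _ (hi j hj))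
  have hpiece_integrable : ∀ {G P : ℝ → ℝ}, ContinuousOn G (uIcc (x 0) (x n)) →
      (∀ i ∈ Finset.Icc 1 n, ∀ z ∈ Ico (x (i - 1)) (x i), P z = d i * G ((z - e i) / a i) + f i) →
      ∀ j < n, IntervalIntegrable P volume (x j) (x (j + 1)) := fun hG hP j hj =>
    intervalIntegrable_of_eqOn_Ico_comp_affine (hx j hj).le hG (mapsTo_affine_piece (hend j hj))
      (hP _ (hi j hj))
  have hdiff := fun j (hj : j < n) z (hz : z ∈ Icc (x j) (x (j + 1))) =>
    integral_sub_eq_of_eqOn_Ico_comp_affine (ha _ (hi j hj)) hz (hPg _ (hi j hj))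
      (hPh _ (hi j hj)) (hpiece_integrable hg hPg j hj) (hpiece_integrable hh hPh j hj)
  have hpiece_eq : ∀ j < n, ∫ t in (x j)..(x (j + 1)), Pg t = ∫ t in (x j)..(x (j + 1)), Ph t := by
    intro j hj
    have := hdiff j hj (x (j + 1)) ⟨(hx j hj).le, le_rfl⟩
    rwa [integral_affine_piece_eq_zero (p := x j) (hend j hj) hgh, mul_zero, sub_eq_zero] at this
  refine ⟨fun k hk => ?_, fun i hi z hz => ?_⟩
  · rw [integral_eq_of_integral_eq_on_pieces (hpiece_integrable hg hPg)
      (hpiece_integrable hh hPh) hpiece_eq (Finset.mem_Icc.1 hk).2]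
  · obtain ⟨j, rfl⟩ : ∃ j, i = j + 1 := ⟨i - 1, by grind⟩
    have hj : j < n := by grind
    rw [add_sub_add_left_eq_sub, integral_sub_eq_of_integral_eq_on_pieces
      (hpiece_integrable hg hPg) (hpiece_integrable hh hPh) hpiece_eq hj hz]
    exact hdiff j hj z hz

/-- From the proof of Theorem 10 of the paper: if `Σ aᵢ³dᵢ/|aᵢ| = 0` and `g`, `h` are
continuous on `[x₀,xₙ]` with equal integrals, then `F_{y₀}(g)(x_k) = F_{y₀}(h)(x_k)` for
`k = 1,…,n`, and for `x ∈ [x_{i-1}, x_i]`,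
`F_{y₀}(g)(x) − F_{y₀}(h)(x) = aᵢ dᵢ ∫_{(x_{i−1}−eᵢ)/aᵢ}^{(x−eᵢ)/aᵢ} (g − h)`. -/
theorem fractal_transform_difference (n : ℕ) (hn : 1 ≤ n)
    (x a d e f : ℕ → ℝ)
    (hx : ∀ j < n, x j < x (j + 1))
    (ha : ∀ i ∈ Finset.Icc 1 n, a i ≠ 0)
    (hmap : ∀ i ∈ Finset.Icc 1 n,
      (0 < a i → a i = (x i - x (i - 1)) / (x n - x 0) ∧ e i = x i - a i * x n) ∧
      (a i < 0 → a i = (x (i - 1) - x i) / (x n - x 0) ∧ e i = x i - a i * x 0))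
    (hsum : ∑ i ∈ Finset.Icc 1 n, a i ^ 3 * d i / |a i| = 0)
    (y₀ : ℝ) (g h Pg Ph : ℝ → ℝ)
    (hg : ContinuousOn g (Set.Icc (x 0) (x n)))
    (hh : ContinuousOn h (Set.Icc (x 0) (x n)))
    (hint : (∫ z in (x 0)..(x n), g z) = ∫ z in (x 0)..(x n), h z)
    (hPg : ∀ i ∈ Finset.Icc 1 n, ∀ z ∈ Set.Ico (x (i - 1)) (x i),
      Pg z = d i * g ((z - e i) / a i) + f i)
    (hPh : ∀ i ∈ Finset.Icc 1 n, ∀ z ∈ Set.Ico (x (i - 1)) (x i),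
      Ph z = d i * h ((z - e i) / a i) + f i) :
    (∀ k ∈ Finset.Icc 1 n,
      y₀ + (∫ t in (x 0)..(x k), Pg t) = y₀ + ∫ t in (x 0)..(x k), Ph t) ∧
    ∀ i ∈ Finset.Icc 1 n, ∀ z ∈ Set.Icc (x (i - 1)) (x i),
      (y₀ + ∫ t in (x 0)..z, Pg t) - (y₀ + ∫ t in (x 0)..z, Ph t) =
        a i * d i * ∫ u in ((x (i - 1) - e i) / a i)..((z - e i) / a i), (g u - h u) :=
  fractal_transform_difference_general n x a d e f hx ha hmap y₀ g h Pg Ph hg hh hint hPg hPh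
end
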